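/- For k ≥ 2 and n ≥ k, we have ⌈n/(k−1)⌉ ≤ crx_k(K_{k,n}) ≤ kn. -/

import Mathlib

open SimpleGraph

/-- `G.CycleThrough S`: there is a cycle in `G` containing all vertices of `S`. -/
def SimpleGraph.CycleThrough {V : Type*} (G : SimpleGraph V) (S : Set V) : Prop :=
  ∃ (u : V) (c : G.Walk u u), c.IsCycle ∧ ∀ v ∈ S, v ∈ c.support

/-- A `k`-rainbow cycle colouring: every `k`-set of vertices lies in a cycle whose
edges receive pairwise distinct colours. -/
def SimpleGraph.IsRainbowCycleColoring {V : Type*} (G : SimpleGraph V) (k : ℕ)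
    (φ : Sym2 V → ℕ) : Prop :=
  ∀ S : Finset V, S.card = k →
    ∃ (u : V) (c : G.Walk u u), c.IsCycle ∧ (∀ v ∈ S, v ∈ c.support) ∧
      (c.edges.map φ).Nodup

/-- The `k`-rainbow cycle index `crx_k(G)`. -/
noncomputable def SimpleGraph.crx {V : Type*} (G : SimpleGraph V) (k : ℕ) : ℕ :=
  sInf {r | ∃ φ : Sym2 V → ℕ, (∀ e ∈ G.edgeSet, φ e < r) ∧ G.IsRainbowCycleColoring k φ}

/-- Number of edges of `G`. -/
noncomputable def SimpleGraph.numEdges {V : Type*} (G : SimpleGraph V) : ℕ :=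
  Nat.card G.edgeSet

/-- A graph is 2-connected if it has more than 2 vertices and deleting any vertex
leaves it connected. -/
def SimpleGraph.IsTwoConnected {V : Type*} (G : SimpleGraph V) : Prop :=
  2 < Nat.card V ∧ ∀ v : V, (G.induce {w | w ≠ v}).Connected

/-- A graph is Hamiltonian if it has a cycle through all its vertices. -/
def SimpleGraph.IsHamiltonianGraph {V : Type*} (G : SimpleGraph V) : Prop :=
  ∃ (u : V) (c : G.Walk u u), c.IsCycle ∧ ∀ v : V, v ∈ c.support

/-!
Upper bound: colour the `k * n` edges injectively. Any `k` vertices lie on a cycle that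
zigzags through all `k` vertices of the small side and `k` vertices of the large side,
among them the large-side vertices of the given set.

Lower bound: a cycle of `K_{k,n}` alternates between the sides, so a cycle through `k`
vertices of the large side visits every vertex of the small side and no further vertex of
the large side. If `n > (k - 1) r`, some colour appears on `k` edges at a fixed small-side
vertex `a`; a cycle through the far endpoints of these edges enters and leaves `a` along two
of them, so it is not rainbow.
-/

open Finset Function Sum

namespace SimpleGraph

variable {V : Type*} {G : SimpleGraph V}

namespace Walk

-- Stated for open walks so that it survives the induction; on a closed walk the endpoint
-- terms cancel.
theorem countP_support_tail_add_toNat (C : G.Coloring Bool) :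
    ∀ {u v : V} (p : G.Walk u v),
      p.support.tail.countP (C ·) + (C u).toNat = p.support.tail.countP (!C ·) + (C v).toNat
  | _, _, nil => by simp
  | u, _, cons (v := w) h p => by
    have hne := C.valid h
    have ih := countP_support_tail_add_toNat C p
    rw [support_cons, List.tail_cons, ← cons_tail_support p, List.countP_cons, List.countP_cons]
    grind

theorem IsCycle.card_filter_coloring_eq [DecidableEq V] {u : V} {c : G.Walk u u}
    (hc : c.IsCycle) (C : G.Coloring Bool) :
    #{v ∈ c.support.toFinset | C v} = #{v ∈ c.support.toFinset | !C v} := by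
  have hsupp : c.support.toFinset = c.support.tail.toFinset := by
    ext v
    simp only [List.mem_toFinset, mem_support_iff]
    exact ⟨by rintro (rfl | h); exacts [end_mem_tail_support hc.not_nil, h], Or.inr⟩
  have hcount := countP_support_tail_add_toNat C c
  rw [hsupp, hc.support_nodup.card_eq_countP, hc.support_nodup.card_eq_countP]
  simpa using hcount

theorem IsCycle.exists_ne_mem_edges {u v : V} {c : G.Walk u u} (hc : c.IsCycle)
    (hv : v ∈ c.support) : ∃ w w', w ≠ w' ∧ s(v, w) ∈ c.edges ∧ s(v, w') ∈ c.edges := by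
  obtain ⟨w, w', hww', hvw⟩ := Set.ncard_eq_two.mp (hc.ncard_neighborSet_toSubgraph_eq_two hv)
  simp only [← adj_toSubgraph_iff_mem_edges, ← Subgraph.mem_neighborSet, hvw]
  exact ⟨w, w', hww', by simp, by simp⟩

end Walk

theorem CycleThrough.mono {S T : Set V} (h : G.CycleThrough T) (hST : S ⊆ T) :
    G.CycleThrough S :=
  let ⟨u, c, hc, hT⟩ := h
  ⟨u, c, hc, fun v hv => hT v (hST hv)⟩

theorem cycleThrough_range_of_injective {N : ℕ} (hN : 3 ≤ N) (f : cycleGraph N →g G)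
    (hf : Injective f) : G.CycleThrough (Set.range f) := by
  obtain ⟨m, rfl⟩ : ∃ m, N = m + 3 := ⟨N - 3, by omega⟩
  refine ⟨f 0, (cycleGraph.cycle m).map f, cycleGraph.isCycle_cycle.map hf, ?_⟩
  rintro _ ⟨v, rfl⟩
  have hv : (cycleGraph.cycle m).getVert (m + 3 - v) = v := by
    rw [cycleGraph.getVert_cycle (by omega)]
    ext
    simp [Nat.sub_sub_self v.is_le', Nat.mod_eq_of_lt v.is_lt]
  rw [Walk.support_map]
  exact List.mem_map_of_mem (hv ▸ Walk.getVert_mem_support _ _)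

theorem isRainbowCycleColoring_of_injOn {k : ℕ} {φ : Sym2 V → ℕ} (hφ : Set.InjOn φ G.edgeSet)
    (h : ∀ S : Finset V, #S = k → G.CycleThrough S) : G.IsRainbowCycleColoring k φ := by
  intro S hS
  obtain ⟨u, c, hc, hsupp⟩ := h S hS
  exact ⟨u, c, hc, hsupp, hc.edges_nodup.map_on fun e he e' he' =>
    hφ (c.edges_subset_edgeSet he) (c.edges_subset_edgeSet he')⟩

theorem exists_isRainbowCycleColoring_lt_numEdges [Finite G.edgeSet] {k : ℕ}
    (h : ∀ S : Finset V, #S = k → G.CycleThrough S) :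
    ∃ φ : Sym2 V → ℕ, (∀ e ∈ G.edgeSet, φ e < G.numEdges) ∧ G.IsRainbowCycleColoring k φ := by
  classical
  let φ (e : Sym2 V) : ℕ := if he : e ∈ G.edgeSet then Finite.equivFin G.edgeSet ⟨e, he⟩ else 0
  refine ⟨φ, fun e he => by simp [φ, he, numEdges], isRainbowCycleColoring_of_injOn ?_ h⟩
  intro e he e' he' hee'
  have := (Finite.equivFin G.edgeSet).injective (Fin.ext (by simpa [φ, he, he'] using hee'))
  exact congrArg Subtype.val this

theorem numEdges_completeBipartiteGraph {α β : Type*} [Fintype α] [Fintype β] :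
    (completeBipartiteGraph α β).numEdges = Fintype.card α * Fintype.card β := by
  rw [numEdges, Nat.card_coe_set_eq, Set.ncard_def, encard_edgeSet_completeBipartiteGraph]
  simp

namespace completeBipartiteGraph

variable {α β : Type*}

theorem mem_support_of_isCycle_of_card_eq [Fintype α] {u : α ⊕ β}
    {c : (completeBipartiteGraph α β).Walk u u} (hc : c.IsCycle) {T : Finset β}
    (hT : #T = Fintype.card α) (hTc : ∀ b ∈ T, inr b ∈ c.support) :
    (∀ a, inl a ∈ c.support) ∧ ∀ b, inr b ∈ c.support → b ∈ T := by
  classical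
  set C := CompleteBipartiteGraph.bicoloring α β
  have hC (v : α ⊕ β) : C v = v.isRight := rfl
  set L := {v ∈ c.support.toFinset | !C v}
  set R := {v ∈ c.support.toFinset | C v}
  have hRL : #R = #L := hc.card_filter_coloring_eq C
  have hL : L ⊆ univ.map .inl := by
    rintro (a | b) <;> simp [L, hC]
  have hR : T.map .inr ⊆ R := by
    intro v hv
    obtain ⟨b, hb, rfl⟩ := mem_map.mp hv
    simpa [R, hC] using hTc b hb
  have hLeq : L = univ.map .inl :=
    eq_of_subset_of_card_le hL (by have := card_le_card hR; simp_all)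
  have hReq : T.map .inr = R :=
    eq_of_subset_of_card_le hR (by have := card_le_card hL; simp_all)
  constructor
  · intro a
    have : inl a ∈ L := hLeq ▸ mem_map_of_mem _ (mem_univ a)
    simpa [L, hC] using this
  · intro b hb
    have : inr b ∈ R := by simpa [R, hC] using hb
    simpa [← hReq] using this

theorem not_nodup_map_edges_of_monochromatic [Fintype α] (φ : Sym2 (α ⊕ β) → ℕ) {a : α}
    {T : Finset β} (hT : #T = Fintype.card α) {y : ℕ} (hy : ∀ b ∈ T, φ s(inl a, inr b) = y)
    {u : α ⊕ β} {c : (completeBipartiteGraph α β).Walk u u} (hc : c.IsCycle)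
    (hTc : ∀ b ∈ T, inr b ∈ c.support) : ¬ (c.edges.map φ).Nodup := by
  have hsupp := mem_support_of_isCycle_of_card_eq hc hT hTc
  have hcolour : ∀ x, s(inl a, x) ∈ c.edges → φ s(inl a, x) = y := by
    rintro (a' | b) he
    · simpa using c.edges_subset_edgeSet he
    · exact hy b (hsupp.2 b (c.snd_mem_support_of_mem_edges he))
  obtain ⟨w, w', hww', hw, hw'⟩ := hc.exists_ne_mem_edges (hsupp.1 a)
  intro hnd
  exact hww' (Sym2.congr_right.mp
    (List.inj_on_of_nodup_map hnd hw hw' (by rw [hcolour w hw, hcolour w' hw'])))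

theorem card_le_mul_of_isRainbowCycleColoring [Fintype α] [Fintype β] (a : α)
    {φ : Sym2 (α ⊕ β) → ℕ} {r : ℕ}
    (hr : ∀ e ∈ (completeBipartiteGraph α β).edgeSet, φ e < r)
    (hφ : (completeBipartiteGraph α β).IsRainbowCycleColoring (Fintype.card α) φ) :
    Fintype.card β ≤ (Fintype.card α - 1) * r := by
  by_contra! hlt
  have hmaps : ∀ b ∈ (univ : Finset β), φ s(inl a, inr b) ∈ range r := fun b _ =>
    mem_range.mpr (hr _ (by simp))
  obtain ⟨y, -, hy⟩ := exists_lt_card_fiber_of_mul_lt_card_of_maps_to hmaps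
    (by simpa [mul_comm] using hlt)
  obtain ⟨T, hTy, hT⟩ := exists_subset_card_eq
    (show Fintype.card α ≤ #{b | φ s(inl a, inr b) = y} by
      have := Fintype.card_pos_iff.mpr ⟨a⟩; omega)
  obtain ⟨u, c, hc, hsupp, hnd⟩ := hφ (T.map .inr) (by simp [hT])
  exact not_nodup_map_edges_of_monochromatic φ hT (fun b hb => (mem_filter.mp (hTy hb)).2) hc
    (fun b hb => hsupp _ (mem_map_of_mem _ hb)) hnd

variable {k : ℕ}

/-- The cycle `inl 0, inr (f 0), inl 1, inr (f 1), …, inr (f (k - 1))`, parametrised by the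
cycle graph on `2 * k` vertices. -/
def zigzag (f : Fin k → β) : cycleGraph (2 * k) →g completeBipartiteGraph (Fin k) β where
  toFun v := if v.val % 2 = 0 then inl ⟨v / 2, by omega⟩ else inr (f ⟨v / 2, by omega⟩)
  map_rel' {v w} h := by
    set C := cycleGraph.bicoloring_of_even (2 * k) (even_two_mul k)
    have hC (v : Fin (2 * k)) : C v = decide (v.val % 2 = 0) := rfl
    have := C.valid h
    simp only [hC] at this
    split_ifs <;> simp_all

theorem zigzag_apply (f : Fin k → β) (v : Fin (2 * k)) :
    zigzag f v = if v.val % 2 = 0 then inl ⟨v / 2, by omega⟩ else inr (f ⟨v / 2, by omega⟩) :=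
  rfl

theorem zigzag_injective {f : Fin k → β} (hf : Injective f) : Injective (zigzag f) := by
  intro v w h
  simp only [zigzag_apply] at h
  rw [Fin.ext_iff]
  split_ifs at h <;> simp only [inl.injEq, inr.injEq, Fin.mk.injEq, hf.eq_iff] at h
    <;> omega

theorem cycleThrough_of_card_le [Fintype β] (hk : 2 ≤ k) (hβ : k ≤ Fintype.card β)
    (S : Finset (Fin k ⊕ β)) (hS : #S ≤ k) :
    (completeBipartiteGraph (Fin k) β).CycleThrough S := by
  classical
  obtain ⟨T, hST, -, hT⟩ :=
    exists_subsuperset_card_eq (subset_univ S.toRight) (card_toRight_le.trans hS) (by simpa)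
  let e : T ≃ Fin k := Fintype.equivFinOfCardEq (by simpa using hT)
  let f (i : Fin k) : β := e.symm i
  have hf : Injective f := Subtype.val_injective.comp e.symm.injective
  refine (cycleThrough_range_of_injective (by omega) (zigzag f) (zigzag_injective hf)).mono ?_
  rintro (i | b) hv
  · exact ⟨⟨2 * i, by omega⟩, by simp [zigzag_apply]⟩
  · have hb : b ∈ T := hST (mem_toRight.mpr hv)
    refine ⟨⟨2 * e ⟨b, hb⟩ + 1, by omega⟩, ?_⟩
    simp [zigzag_apply, f, Nat.mul_add_div]

end completeBipartiteGraph

end SimpleGraph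

/-- for k ≥ 2 and n ≥ k, ⌈n/(k−1)⌉ ≤ crx_k(K_{k,n}) ≤ kn. -/
theorem crx_k_completeBipartite_k (k n : ℕ) (hk : 2 ≤ k) (hn : k ≤ n) :
    (n + (k - 1) - 1) / (k - 1) ≤ (completeBipartiteGraph (Fin k) (Fin n)).crx k ∧
      (completeBipartiteGraph (Fin k) (Fin n)).crx k ≤ k * n := by
  set G := completeBipartiteGraph (Fin k) (Fin n)
  have hcolourings :
      k * n ∈ {r | ∃ φ, (∀ e ∈ G.edgeSet, φ e < r) ∧ G.IsRainbowCycleColoring k φ} := by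
    simpa [G, numEdges_completeBipartiteGraph] using exists_isRainbowCycleColoring_lt_numEdges
      fun S hS => completeBipartiteGraph.cycleThrough_of_card_le (β := Fin n) hk (by simpa) S
        hS.le
  refine ⟨?_, Nat.sInf_le hcolourings⟩
  obtain ⟨φ, hφ, hrainbow⟩ : G.crx k ∈ _ := Nat.sInf_mem ⟨_, hcolourings⟩
  have hlower := completeBipartiteGraph.card_le_mul_of_isRainbowCycleColoring
    (⟨0, by omega⟩ : Fin k) hφ (by simpa using hrainbow)
  simp only [Fintype.card_fin] at hlower
  rw [Nat.div_le_iff_le_mul_add_pred (by omega)]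
  omega
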